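/- arXiv:math-ph/0512075 — 3 statements merged into one kernel-verified Lean document; each statement's English description precedes it below -/
import Mathlib

section
/- Let H be a complex Hilbert space, S unitary on H, and define for t ∈ ℝ the map V^t on L²(ℝ, H) by (V^t χ)(z) = e^{(i/ħ)zH} S^{Δ₀ᵗ(z+t)} e^{−(i/ħ)(z+t)H} χ(z+t), where Δ₀ᵗ(s) = 1_t(s) − 1_0(s) and H is a bounded self-adjoint operator. Then each V^t is unitary and t ↦ V^t is a one-parameter group: V^r V^t = V^{r+t} for all r, t ∈ ℝ. -/
open MeasureTheory

noncomputable section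

variable {H : Type*} [NormedAddCommGroup H] [InnerProductSpace ℂ H] [CompleteSpace H]

/-- `expIH ħ Hop r = e^{(i/ħ) r Hop}`. -/
def expIH (hbar : ℝ) (Hop : H →L[ℂ] H) (r : ℝ) : H →L[ℂ] H :=
  NormedSpace.exp (((r / hbar : ℝ) : ℂ) • Complex.I • Hop)

/-- `Δ₀ᵗ(s) = 1_t(s) − 1_0(s)` with `1_t` the indicator of `(−∞, t)`. -/
def DeltaZ (t s : ℝ) : ℤ := (if s < t then 1 else 0) - (if s < 0 then 1 else 0)

/-- The resolving evolution of the Dirac boundary value problem: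
`(V^t χ)(z) = e^{(i/ħ)zH} S^{Δ₀ᵗ(z+t)} e^{−(i/ħ)(z+t)H} χ(z+t)`. -/
def Vgrp (hbar : ℝ) (Hop : H →L[ℂ] H) (S : unitary (H →L[ℂ] H)) (t : ℝ)
    (χ : ℝ → H) : ℝ → H := fun z =>
  expIH hbar Hop z
    (((S ^ DeltaZ t (z + t) : unitary (H →L[ℂ] H)) : H →L[ℂ] H)
      (expIH hbar Hop (-(z + t)) (χ (z + t))))

/-!
Each factor of `(V^t χ)(z)` is unitary pointwise, so `‖(V^t χ)(z)‖ = ‖χ(z + t)‖` and the `L²` norm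
is preserved by translation invariance of Lebesgue measure. In `V^r V^t χ` the inner factors
`e^{-(i/ħ)(z+r)H} e^{(i/ħ)(z+r)H}` cancel, and the powers of `S` combine because `Δ` is a cocycle:
`Δ₀ʳ(z + r) + Δ₀ᵗ(z + r + t) = Δ₀^{r+t}(z + r + t)`.
-/

lemma expIH_add (hbar : ℝ) (Hop : H →L[ℂ] H) (a b : ℝ) :
    expIH hbar Hop a * expIH hbar Hop b = expIH hbar Hop (a + b) := by
  -- the lemmas on `NormedSpace.exp` are stated over a normed `ℚ`-algebra
  let +nondep : NormedAlgebra ℚ (H →L[ℂ] H) := .restrictScalars ℚ ℂ (H →L[ℂ] H)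
  rw [expIH, expIH, expIH, ← NormedSpace.exp_add_of_commute
    ((Commute.refl _).smul_left _ |>.smul_right _), ← add_smul, add_div, Complex.ofReal_add]

lemma expIH_zero (hbar : ℝ) (Hop : H →L[ℂ] H) : expIH hbar Hop 0 = 1 := by
  simp [expIH]

lemma expIH_neg_apply_expIH (hbar : ℝ) (Hop : H →L[ℂ] H) (a : ℝ) (v : H) :
    expIH hbar Hop (-a) (expIH hbar Hop a v) = v := by
  rw [← mul_apply_eq_comp, expIH_add, neg_add_cancel, expIH_zero,
    one_apply_eq_self]

lemma expIH_mem_unitary (hbar : ℝ) {Hop : H →L[ℂ] H} (hH : IsSelfAdjoint Hop) (r : ℝ) :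
    expIH hbar Hop r ∈ unitary (H →L[ℂ] H) := by
  let +nondep : NormedAlgebra ℚ (H →L[ℂ] H) := .restrictScalars ℚ ℂ (H →L[ℂ] H)
  rw [expIH, smul_comm]
  refine NormedSpace.exp_mem_unitary_of_mem_skewAdjoint ?_
  rw [skewAdjoint.mem_iff, star_smul, star_smul, hH.star_eq]
  simp [← neg_smul]

lemma DeltaZ_add_add (r t z : ℝ) :
    DeltaZ r (z + r) + DeltaZ t (z + r + t) = DeltaZ (r + t) (z + r + t) := by
  simp only [DeltaZ, add_lt_add_iff_right, add_lt_iff_neg_right]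
  ring

theorem eLpNorm_comp_add_right {G ε : Type*} [MeasurableSpace G] [AddGroup G] [MeasurableAdd G]
    [TopologicalSpace ε] [ContinuousENorm ε] (μ : Measure G) [μ.IsAddRightInvariant]
    (f : G → ε) (g : G) (p : ENNReal) :
    eLpNorm (fun x => f (x + g)) p μ = eLpNorm f p μ := by
  conv_rhs => rw [← map_add_right_eq_self μ g]
  exact ((MeasurableEquiv.addRight g).measurableEmbedding.eLpNorm_map_measure).symm

lemma norm_Vgrp_apply (hbar : ℝ) {Hop : H →L[ℂ] H} (hH : IsSelfAdjoint Hop)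
    (S : unitary (H →L[ℂ] H)) (t : ℝ) (χ : ℝ → H) (z : ℝ) :
    ‖Vgrp hbar Hop S t χ z‖ = ‖χ (z + t)‖ := by
  rw [Vgrp, ContinuousLinearMap.norm_map_of_mem_unitary (expIH_mem_unitary hbar hH z),
    ContinuousLinearMap.norm_map_of_mem_unitary (S ^ DeltaZ t (z + t)).property,
    ContinuousLinearMap.norm_map_of_mem_unitary (expIH_mem_unitary hbar hH _)]

lemma Vgrp_Vgrp (hbar : ℝ) (Hop : H →L[ℂ] H) (S : unitary (H →L[ℂ] H)) (r t : ℝ)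
    (χ : ℝ → H) : Vgrp hbar Hop S r (Vgrp hbar Hop S t χ) = Vgrp hbar Hop S (r + t) χ := by
  funext z
  rw [Vgrp, Vgrp, Vgrp, expIH_neg_apply_expIH, ← add_assoc, ← DeltaZ_add_add, zpow_add,
    Submonoid.coe_mul, mul_apply_eq_comp]

theorem Vgrp_unitary_group_general (hbar : ℝ)
    (Hop : H →L[ℂ] H) (hH : IsSelfAdjoint Hop)
    (S : unitary (H →L[ℂ] H)) :
    (∀ (t : ℝ) (χ : ℝ → H),
      eLpNorm (Vgrp hbar Hop S t χ) 2 volume = eLpNorm χ 2 volume) ∧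
    (∀ (r t : ℝ) (χ : ℝ → H),
      Vgrp hbar Hop S r (Vgrp hbar Hop S t χ) = Vgrp hbar Hop S (r + t) χ) := by
  refine ⟨fun t χ => ?_, Vgrp_Vgrp hbar Hop S⟩
  rw [eLpNorm_congr_norm_ae (ae_of_all _ (norm_Vgrp_apply hbar hH S t χ))]
  exact eLpNorm_comp_add_right volume χ t 2

/-- Each `V^t` is unitary on `L²(ℝ, H)` (it is a surjective `L²`-isometry by the
group law) and `t ↦ V^t` is a one-parameter group: `V^r V^t = V^{r+t}`. -/
theorem Vgrp_unitary_group (hbar : ℝ) (hh : 0 < hbar)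
    (Hop : H →L[ℂ] H) (hH : IsSelfAdjoint Hop)
    (S : unitary (H →L[ℂ] H)) :
    (∀ (t : ℝ) (χ : ℝ → H),
      eLpNorm (Vgrp hbar Hop S t χ) 2 volume = eLpNorm χ 2 volume) ∧
    (∀ (r t : ℝ) (χ : ℝ → H),
      Vgrp hbar Hop S r (Vgrp hbar Hop S t χ) = Vgrp hbar Hop S (r + t) χ) :=
  Vgrp_unitary_group_general hbar Hop hH S

end
end

section
/- Let g ∈ L²((−∞, κ°], h) with ‖g‖ ≤ 1, m > 0, t ∈ ℝ, and for κ > κ° + m define I(κ°, κ) = (1/2π)∫_{−∞}^{κ°} ‖(e^{−i(k + ε(κ−k) − κ)t} − 1) g(k)‖² dk, where ε(k) = √(k² + m²). Then I(κ°, κ) → 0 as κ → ∞; moreover if additionally |t| m²/(κ − κ°) ≤ 1 then I(κ°, κ) ≤ (|t| m²/(κ − κ°))² ‖g‖². -/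
open MeasureTheory Filter Topology Real

/-!
For `k ≤ κ₀ < κ` the phase `k + ε(κ - k) - κ = √((κ - k)² + m²) - (κ - k)` lies in
`[0, m² / (κ - κ₀)]`, since `√(u² + m²) ≤ u + m² / (2u)`. With `|e^{ix} - 1| ≤ |x|` the
multiplier `e^{-i(k + ε(κ - k) - κ)t} - 1` is therefore bounded by `|t| m² / (κ - κ₀)`
uniformly on `(-∞, κ₀]`, which bounds the integral by that constant squared times `‖g‖²`
and makes it vanish as `κ → ∞`.
-/

lemma Real.sqrt_sq_add_sq_le {u : ℝ} (hu : 0 < u) (m : ℝ) :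
    √(u ^ 2 + m ^ 2) ≤ u + m ^ 2 / (2 * u) := by
  rw [Real.sqrt_le_iff]
  refine ⟨by positivity, ?_⟩
  have hcross : 2 * u * (m ^ 2 / (2 * u)) = m ^ 2 := by field_simp
  nlinarith [sq_nonneg (m ^ 2 / (2 * u))]

lemma dispersion_phase_mem_Icc {m κ₀ κ k : ℝ} (hκ : κ₀ < κ) (hk : k ≤ κ₀) :
    k + √((κ - k) ^ 2 + m ^ 2) - κ ∈ Set.Icc 0 (m ^ 2 / (κ - κ₀)) := by
  have hgap : 0 < κ - κ₀ := sub_pos.mpr hκ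
  have hu : κ - κ₀ ≤ κ - k := by linarith
  have hlower : κ - k ≤ √((κ - k) ^ 2 + m ^ 2) :=
    Real.le_sqrt_of_sq_le (le_add_of_nonneg_right (sq_nonneg m))
  have hupper := Real.sqrt_sq_add_sq_le (hgap.trans_le hu) m
  have hshrink : m ^ 2 / (2 * (κ - k)) ≤ m ^ 2 / (κ - κ₀) :=
    div_le_div_of_nonneg_left (sq_nonneg m) hgap (by linarith)
  constructor <;> linarith

lemma Complex.norm_exp_neg_I_mul_ofReal_mul_sub_one_le (θ t : ℝ) :
    ‖Complex.exp (-Complex.I * θ * t) - 1‖ ≤ |θ| * |t| := by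
  have hrewrite : -Complex.I * θ * t = Complex.I * ((-(θ * t) : ℝ) : ℂ) := by
    push_cast; ring
  rw [hrewrite, ← abs_mul, ← abs_neg, ← Real.norm_eq_abs]
  exact Real.norm_exp_I_mul_ofReal_sub_one_le

lemma integral_norm_smul_sq_le {α 𝕜 E : Type*} [MeasurableSpace α] {μ : Measure α}
    [NormedField 𝕜] [NormedAddCommGroup E] [NormedSpace 𝕜 E] {c : α → 𝕜} {g : α → E} {C : ℝ}
    (hg : Integrable (fun x => ‖g x‖ ^ 2) μ) (hc : ∀ᵐ x ∂μ, ‖c x‖ ≤ C) :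
    ∫ x, ‖c x • g x‖ ^ 2 ∂μ ≤ C ^ 2 * ∫ x, ‖g x‖ ^ 2 ∂μ := by
  rw [← integral_const_mul]
  refine integral_mono_of_nonneg (ae_of_all _ fun x => by positivity) (hg.const_mul _) ?_
  filter_upwards [hc] with x hx
  rw [norm_smul, mul_pow]
  gcongr

lemma ultrarelativistic_bound {h : Type*} [NormedAddCommGroup h] [NormedSpace ℂ h]
    {m κ₀ κ t : ℝ} {g : ℝ → h}
    (hint : Integrable (fun k => ‖g k‖ ^ 2) (volume.restrict (Set.Iic κ₀))) (hκ : κ₀ < κ) :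
    (1 / (2 * π)) * (∫ k in Set.Iic κ₀,
        ‖(Complex.exp (-Complex.I * (↑(k + √((κ - k) ^ 2 + m ^ 2) - κ)) * (t : ℂ)) - 1) •
          g k‖ ^ 2) ≤
      (|t| * m ^ 2 / (κ - κ₀)) ^ 2 * ((1 / (2 * π)) * ∫ k in Set.Iic κ₀, ‖g k‖ ^ 2) := by
  have hmultiplier : ∀ᵐ k ∂volume.restrict (Set.Iic κ₀),
      ‖Complex.exp (-Complex.I * (↑(k + √((κ - k) ^ 2 + m ^ 2) - κ)) * (t : ℂ)) - 1‖ ≤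
        |t| * m ^ 2 / (κ - κ₀) := by
    refine ae_restrict_of_forall_mem measurableSet_Iic fun k hk => ?_
    obtain ⟨hphase_nonneg, hphase_le⟩ := dispersion_phase_mem_Icc (m := m) hκ hk
    calc _ ≤ |k + √((κ - k) ^ 2 + m ^ 2) - κ| * |t| :=
          Complex.norm_exp_neg_I_mul_ofReal_mul_sub_one_le _ _
      _ ≤ m ^ 2 / (κ - κ₀) * |t| := by
          rw [abs_of_nonneg hphase_nonneg]; gcongr
      _ = |t| * m ^ 2 / (κ - κ₀) := by ring
  have hintegral := integral_norm_smul_sq_le hint hmultiplier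
  calc _ ≤ (1 / (2 * π)) *
          ((|t| * m ^ 2 / (κ - κ₀)) ^ 2 * ∫ k in Set.Iic κ₀, ‖g k‖ ^ 2) := by gcongr
    _ = _ := by ring

theorem ultrarelativistic_estimate_general
    {h : Type*} [NormedAddCommGroup h] [InnerProductSpace ℂ h]
    (m κ₀ t : ℝ) (hm : 0 < m)
    (g : ℝ → h)
    (hint : Integrable (fun k => ‖g k‖ ^ 2) (volume.restrict (Set.Iic κ₀))) :
    Tendsto (fun κ : ℝ => (1 / (2 * π)) * ∫ k in Set.Iic κ₀,
        ‖(Complex.exp (-Complex.I * (↑(k + Real.sqrt ((κ - k) ^ 2 + m ^ 2) - κ)) * (t : ℂ))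
            - 1) • g k‖ ^ 2)
      atTop (𝓝 0) ∧
    ∀ κ : ℝ, κ₀ + m < κ → |t| * m ^ 2 / (κ - κ₀) ≤ 1 →
      (1 / (2 * π)) * (∫ k in Set.Iic κ₀,
          ‖(Complex.exp (-Complex.I * (↑(k + Real.sqrt ((κ - k) ^ 2 + m ^ 2) - κ)) * (t : ℂ))
              - 1) • g k‖ ^ 2) ≤
        (|t| * m ^ 2 / (κ - κ₀)) ^ 2 * ((1 / (2 * π)) * ∫ k in Set.Iic κ₀, ‖g k‖ ^ 2) := by
  refine ⟨?_, fun κ hκ _ => ultrarelativistic_bound hint (by linarith)⟩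
  have hconst : Tendsto (fun κ : ℝ => |t| * m ^ 2 / (κ - κ₀)) atTop (𝓝 0) :=
    tendsto_const_nhds.div_atTop (tendsto_atTop_add_const_right atTop (-κ₀) tendsto_id)
  have hmajorant :=
    (hconst.pow 2).mul_const ((1 / (2 * π)) * ∫ k in Set.Iic κ₀, ‖g k‖ ^ 2)
  rw [zero_pow two_ne_zero, zero_mul] at hmajorant
  refine tendsto_of_tendsto_of_tendsto_of_le_of_le' tendsto_const_nhds hmajorant
    (Eventually.of_forall fun κ => by positivity) ?_
  filter_upwards [eventually_gt_atTop κ₀] with κ hκ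
  exact ultrarelativistic_bound hint hκ

/-- Key ultrarelativistic estimate: for `g ∈ L²((−∞,κ°], h)` with
`(1/2π)∫‖g‖² ≤ 1`, `m > 0` and
`I(κ°,κ) = (1/2π)∫_{−∞}^{κ°} ‖(e^{−i(k + ε(κ−k) − κ)t} − 1) g(k)‖² dk` with
`ε(k) = √(k² + m²)`, one has `I(κ°,κ) → 0` as `κ → ∞`, and
`I(κ°,κ) ≤ (|t| m²/(κ − κ°))² ‖g‖²` whenever `κ > κ° + m` and
`|t| m²/(κ − κ°) ≤ 1`. -/
theorem ultrarelativistic_estimate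
    {h : Type*} [NormedAddCommGroup h] [InnerProductSpace ℂ h] [CompleteSpace h]
    (m κ₀ t : ℝ) (hm : 0 < m)
    (g : ℝ → h) (hmeas : AEStronglyMeasurable g volume)
    (hint : Integrable (fun k => ‖g k‖ ^ 2) (volume.restrict (Set.Iic κ₀)))
    (hN : (1 / (2 * π)) * ∫ k in Set.Iic κ₀, ‖g k‖ ^ 2 ≤ 1) :
    Tendsto (fun κ : ℝ => (1 / (2 * π)) * ∫ k in Set.Iic κ₀,
        ‖(Complex.exp (-Complex.I * (↑(k + Real.sqrt ((κ - k) ^ 2 + m ^ 2) - κ)) * (t : ℂ))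
            - 1) • g k‖ ^ 2)
      atTop (𝓝 0) ∧
    ∀ κ : ℝ, κ₀ + m < κ → |t| * m ^ 2 / (κ - κ₀) ≤ 1 →
      (1 / (2 * π)) * (∫ k in Set.Iic κ₀,
          ‖(Complex.exp (-Complex.I * (↑(k + Real.sqrt ((κ - k) ^ 2 + m ^ 2) - κ)) * (t : ℂ))
              - 1) • g k‖ ^ 2) ≤
        (|t| * m ^ 2 / (κ - κ₀)) ^ 2 * ((1 / (2 * π)) * ∫ k in Set.Iic κ₀, ‖g k‖ ^ 2) :=
  ultrarelativistic_estimate_general m κ₀ t hm g hint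
end

section
/- Let H be bounded self-adjoint and S unitary on a complex Hilbert space H, with ρ : ℝ⁺ → ℝ⁺ a probability density (∫₀^∞ ρ = 1). For η ∈ H with ‖η‖ = 1, the function χ⁰(z) = √(ρ(z)) η for z > 0 and 0 for z ≤ 0 is a unit vector in L²(ℝ, H), and for t > 0 the evolved vector χᵗ = V^t χ⁰ (with (V^tχ)(z) = e^{(i/ħ)zH}S^{Δ₀ᵗ(z+t)}e^{−(i/ħ)(z+t)H}χ(z+t)) satisfies ∫₀^∞ ‖χᵗ(s − t)‖² ds = 1 and χᵗ(s − t) = V(t,s)√(ρ(s))η where V(t,s) = e^{(i/ħ)(s−t)H}S^{1_{[0,t)}(s)}e^{−(i/ħ)sH}. -/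
open MeasureTheory

noncomputable section

variable {H : Type*} [NormedAddCommGroup H] [InnerProductSpace ℂ H] [CompleteSpace H]

/-- The initial product state `χ⁰(z) = √(ρ(z)) η` for `z > 0`, `0` for `z ≤ 0`. -/
def chiInit (ρ : ℝ → ℝ) (η : H) : ℝ → H := fun z =>
  if 0 < z then Real.sqrt (ρ z) • η else 0

lemma norm_expIH_apply (hbar : ℝ) {Hop : H →L[ℂ] H} (hH : IsSelfAdjoint Hop) (r : ℝ) (x : H) :
    ‖expIH hbar Hop r x‖ = ‖x‖ :=
  ContinuousLinearMap.norm_map_of_mem_unitary (expIH_mem_unitary hbar hH r) x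

lemma Vgrp_sub_apply (hbar : ℝ) (Hop : H →L[ℂ] H) (S : unitary (H →L[ℂ] H)) (t : ℝ)
    (χ : ℝ → H) (s : ℝ) :
    Vgrp hbar Hop S t χ (s - t) =
      expIH hbar Hop (s - t)
        (((S ^ DeltaZ t s : unitary (H →L[ℂ] H)) : H →L[ℂ] H) (expIH hbar Hop (-s) (χ s))) := by
  simp only [Vgrp, sub_add_cancel]

lemma norm_Vgrp_sub_apply (hbar : ℝ) {Hop : H →L[ℂ] H} (hH : IsSelfAdjoint Hop)
    (S : unitary (H →L[ℂ] H)) (t : ℝ) (χ : ℝ → H) (s : ℝ) :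
    ‖Vgrp hbar Hop S t χ (s - t)‖ = ‖χ s‖ := by
  rw [Vgrp_sub_apply, norm_expIH_apply hbar hH,
    ContinuousLinearMap.norm_map_of_mem_unitary (S ^ DeltaZ t s : unitary (H →L[ℂ] H)).prop,
    norm_expIH_apply hbar hH]

lemma setIntegral_norm_Vgrp_sub_sq (hbar : ℝ) {Hop : H →L[ℂ] H} (hH : IsSelfAdjoint Hop)
    (S : unitary (H →L[ℂ] H)) (t : ℝ) (χ : ℝ → H) (A : Set ℝ) :
    ∫ s in A, ‖Vgrp hbar Hop S t χ (s - t)‖ ^ 2 = ∫ s in A, ‖χ s‖ ^ 2 := by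
  simp only [norm_Vgrp_sub_apply hbar hH]

lemma DeltaZ_of_nonneg (t : ℝ) {s : ℝ} (hs : 0 ≤ s) : DeltaZ t s = if s < t then 1 else 0 := by
  rw [DeltaZ, if_neg hs.not_gt, sub_zero]

lemma zpow_DeltaZ_of_nonneg {G : Type*} [Group G] (g : G) (t : ℝ) {s : ℝ} (hs : 0 ≤ s) :
    g ^ DeltaZ t s = if 0 ≤ s ∧ s < t then g else 1 := by
  rw [DeltaZ_of_nonneg t hs]
  split_ifs with hst hst' hst' <;> simp_all

omit [CompleteSpace H] in
lemma norm_chiInit_sq {ρ : ℝ → ℝ} (hρ : ∀ s : ℝ, 0 < s → 0 ≤ ρ s) (η : H) (z : ℝ) :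
    ‖chiInit ρ η z‖ ^ 2 = Set.indicator (Set.Ioi 0) ρ z * ‖η‖ ^ 2 := by
  by_cases hz : 0 < z
  · rw [chiInit, if_pos hz, Set.indicator_of_mem (Set.mem_Ioi.mpr hz), norm_smul, mul_pow,
      Real.norm_eq_abs, sq_abs, Real.sq_sqrt (hρ z hz)]
  · simp [chiInit, hz]

omit [CompleteSpace H] in
lemma integral_norm_chiInit_sq {ρ : ℝ → ℝ} (hρ : ∀ s : ℝ, 0 < s → 0 ≤ ρ s) (η : H) :
    ∫ z : ℝ, ‖chiInit ρ η z‖ ^ 2 = (∫ s in Set.Ioi (0 : ℝ), ρ s) * ‖η‖ ^ 2 := by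
  simp only [norm_chiInit_sq hρ, integral_mul_const, integral_indicator measurableSet_Ioi]

omit [CompleteSpace H] in
lemma setIntegral_Ioi_norm_chiInit_sq (ρ : ℝ → ℝ) (η : H) :
    ∫ s in Set.Ioi (0 : ℝ), ‖chiInit ρ η s‖ ^ 2 = ∫ z : ℝ, ‖chiInit ρ η z‖ ^ 2 :=
  setIntegral_eq_integral_of_forall_compl_eq_zero fun z hz => by
    simp [chiInit, show ¬0 < z from hz]

theorem stochastic_representation_general (hbar : ℝ)
    (Hop : H →L[ℂ] H) (hH : IsSelfAdjoint Hop)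
    (S : unitary (H →L[ℂ] H))
    (ρ : ℝ → ℝ) (hρpos : ∀ s : ℝ, 0 < s → 0 < ρ s)
    (hρnorm : ∫ s in Set.Ioi (0 : ℝ), ρ s = 1)
    (η : H) (hη : ‖η‖ = 1) :
    (∫ z : ℝ, ‖chiInit ρ η z‖ ^ 2 = 1) ∧
    ∀ t : ℝ, 0 < t →
      (∫ s in Set.Ioi (0 : ℝ), ‖Vgrp hbar Hop S t (chiInit ρ η) (s - t)‖ ^ 2 = 1) ∧
      (∀ s : ℝ, 0 < s →
        Vgrp hbar Hop S t (chiInit ρ η) (s - t) =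
          (expIH hbar Hop (s - t) ∘L
            (if 0 ≤ s ∧ s < t then (S : H →L[ℂ] H) else 1) ∘L
              expIH hbar Hop (-s)) (Real.sqrt (ρ s) • η)) := by
  have hunit : ∫ z : ℝ, ‖chiInit ρ η z‖ ^ 2 = 1 := by
    rw [integral_norm_chiInit_sq (fun s hs => (hρpos s hs).le), hρnorm, hη]
    norm_num
  refine ⟨hunit, fun t _ => ⟨?_, fun s hs => ?_⟩⟩
  · rw [setIntegral_norm_Vgrp_sub_sq hbar hH, setIntegral_Ioi_norm_chiInit_sq, hunit]
  · rw [Vgrp_sub_apply, zpow_DeltaZ_of_nonneg S t hs.le, chiInit, if_pos hs]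
    split_ifs <;> rfl

/-- For a probability density `ρ` on `(0,∞)` and a unit vector `η`, the initial
state `χ⁰ = √ρ ⊗ η` is a unit vector of `L²(ℝ, H)`, and the deterministically
evolved `χᵗ = V^t χ⁰` reproduces the stochastic single-jump evolution:
`∫₀^∞ ‖χᵗ(s−t)‖² ds = 1` and `χᵗ(s−t) = V(t,s)√(ρ(s))η` with
`V(t,s) = e^{(i/ħ)(s−t)H} S^{1_{[0,t)}(s)} e^{−(i/ħ)sH}`. -/
theorem stochastic_representation (hbar : ℝ) (hh : 0 < hbar)
    (Hop : H →L[ℂ] H) (hH : IsSelfAdjoint Hop)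
    (S : unitary (H →L[ℂ] H))
    (ρ : ℝ → ℝ) (hρpos : ∀ s : ℝ, 0 < s → 0 < ρ s)
    (hρint : IntegrableOn ρ (Set.Ioi 0))
    (hρnorm : ∫ s in Set.Ioi (0 : ℝ), ρ s = 1)
    (η : H) (hη : ‖η‖ = 1) :
    (∫ z : ℝ, ‖chiInit ρ η z‖ ^ 2 = 1) ∧
    ∀ t : ℝ, 0 < t →
      (∫ s in Set.Ioi (0 : ℝ), ‖Vgrp hbar Hop S t (chiInit ρ η) (s - t)‖ ^ 2 = 1) ∧
      (∀ s : ℝ, 0 < s →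
        Vgrp hbar Hop S t (chiInit ρ η) (s - t) =
          (expIH hbar Hop (s - t) ∘L
            (if 0 ≤ s ∧ s < t then (S : H →L[ℂ] H) else 1) ∘L
              expIH hbar Hop (-s)) (Real.sqrt (ρ s) • η)) :=
  stochastic_representation_general hbar Hop hH S ρ hρpos hρnorm η hη

end
end
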